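/- arXiv:1606.00182 — 4 statements merged into one kernel-verified Lean document; each statement's English description precedes it below -/
import Mathlib

section
/- Let X = {x_1, ..., x_N} be a finite collection of real numbers with x_i ∈ [0,1] for all i, and let μ = (1/N)·Σ_{i=1}^N x_i. If X_1, ..., X_n is a sample drawn uniformly at random from X without replacement, then for every ε > 0, Pr(|(1/n)·Σ_{t=1}^n X_t − μ| ≥ ε) ≤ 2·exp(−2nε²). -/
/-!
Condition on the first draw `a`. The remaining `k` draws are a sample without replacement from
the other `N - 1` elements, and the deviation of the total from its mean splits as the deviation
of this subsample from its own mean plus `(1 - k / (N - 1)) (x a - μ)`. The second term is a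
centred function of the uniformly distributed first draw with range of length at most `1`, so
Hoeffding's lemma bounds its exponential moment by `exp (t² / 8)`. By induction on the sample
size the exponential moment of the deviation of `n` draws is at most `exp (n t² / 8)`, exactly
as for independent draws, and the Chernoff bound with `t = 4 ε` gives the claim.
-/

open Finset MeasureTheory ProbabilityTheory Real

lemma integral_uniformOn_univ {Ω : Type*} [Fintype Ω] [MeasurableSpace Ω]
    [MeasurableSingletonClass Ω] (f : Ω → ℝ) :
    ∫ ω, f ω ∂uniformOn Set.univ = (∑ ω, f ω) / Fintype.card Ω := by
  simp [uniformOn, ProbabilityTheory.cond, integral_smul_measure, div_eq_inv_mul]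

lemma sum_exp_mul_sub_mean_le_of_mem_Icc {ι : Type*} [Fintype ι] {y : ι → ℝ} {a b : ℝ}
    (hy : ∀ i, y i ∈ Set.Icc a b) (t : ℝ) :
    ∑ i, exp (t * (y i - (∑ j, y j) / Fintype.card ι)) ≤
      Fintype.card ι * exp ((b - a) ^ 2 * t ^ 2 / 8) := by
  cases isEmpty_or_nonempty ι
  · simp
  let _ : MeasurableSpace ι := ⊤
  have hmgf := (hasSubgaussianMGF_of_mem_Icc (μ := uniformOn Set.univ) (X := y)
    Measurable.of_discrete.aemeasurable (ae_of_all _ hy)).mgf_le t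
  rw [mgf, integral_uniformOn_univ, integral_uniformOn_univ,
    div_le_iff₀ (by exact_mod_cast Fintype.card_pos)] at hmgf
  refine hmgf.trans_eq ?_
  rw [mul_comm]
  congr 2
  push_cast
  rw [Real.norm_eq_abs, div_pow, sq_abs]
  ring

lemma card_ge_le_of_sum_exp_le {Ω : Type*} [Fintype Ω] {Z : Ω → ℝ} {v : ℝ} (hv : 0 < v)
    (hZ : ∀ t, ∑ ω, exp (t * Z ω) ≤ Fintype.card Ω * exp (v * t ^ 2 / 2)) {s : ℝ} (hs : 0 ≤ s) :
    (#{ω | s ≤ Z ω} : ℝ) ≤ Fintype.card Ω * exp (-s ^ 2 / (2 * v)) := by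
  set t := s / v
  have hmarkov : (#{ω | s ≤ Z ω} : ℝ) * exp (t * s) ≤ ∑ ω, exp (t * Z ω) := by
    calc (#{ω | s ≤ Z ω} : ℝ) * exp (t * s)
        ≤ ∑ ω ∈ univ.filter (fun ω => s ≤ Z ω), exp (t * Z ω) := by
          rw [← nsmul_eq_mul]
          exact card_nsmul_le_sum _ _ _ fun ω hω =>
            exp_le_exp.2 (by gcongr; exact (mem_filter.1 hω).2)
      _ ≤ ∑ ω, exp (t * Z ω) := sum_le_sum_of_subset_of_nonneg (filter_subset _ _)
          fun _ _ _ => (exp_pos _).le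
  have hexp : -s ^ 2 / (2 * v) = v * t ^ 2 / 2 - t * s := by
    simp only [t]
    field_simp
    ring
  rw [hexp, exp_sub, mul_div_assoc', le_div_iff₀ (exp_pos _)]
  exact hmarkov.trans (hZ t)

lemma card_abs_ge_div_card_le_of_sum_exp_le {Ω : Type*} [Fintype Ω] {Z : Ω → ℝ} {v : ℝ}
    (hv : 0 < v) (hZ : ∀ t, ∑ ω, exp (t * Z ω) ≤ Fintype.card Ω * exp (v * t ^ 2 / 2))
    {s : ℝ} (hs : 0 ≤ s) :
    (Nat.card {ω // s ≤ |Z ω|} : ℝ) / Nat.card Ω ≤ 2 * exp (-s ^ 2 / (2 * v)) := by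
  classical
  have hneg : ∀ t, ∑ ω, exp (t * -Z ω) ≤ Fintype.card Ω * exp (v * t ^ 2 / 2) := fun t => by
    simpa [neg_mul_comm] using hZ (-t)
  have hunion : #{ω | s ≤ |Z ω|} ≤ #{ω | s ≤ Z ω} + #{ω | s ≤ -Z ω} := by
    refine (card_le_card fun ω hω => ?_).trans (card_union_le _ _)
    simpa [le_abs', le_neg, or_comm] using hω
  rw [Nat.card_eq_fintype_card, Fintype.card_subtype, Nat.card_eq_fintype_card]
  rcases (Fintype.card Ω).eq_zero_or_pos with hΩ | hΩ
  · simp only [hΩ, Nat.cast_zero, div_zero]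
    positivity
  rw [div_le_iff₀ (by exact_mod_cast hΩ)]
  calc (#{ω | s ≤ |Z ω|} : ℝ) ≤ #{ω | s ≤ Z ω} + #{ω | s ≤ -Z ω} := by exact_mod_cast hunion
    _ ≤ Fintype.card Ω * exp (-s ^ 2 / (2 * v)) + Fintype.card Ω * exp (-s ^ 2 / (2 * v)) :=
        add_le_add (card_ge_le_of_sum_exp_le hv hZ hs) (card_ge_le_of_sum_exp_le hv hneg hs)
    _ = _ := by ring

def Equiv.embeddingFinSuccSigma (k : ℕ) (α : Type*) :
    (Fin (k + 1) ↪ α) ≃ Σ a : α, (Fin k ↪ {b // b ≠ a}) where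
  toFun σ := ⟨σ 0, ⟨fun s => ⟨σ s.succ, fun h => Fin.succ_ne_zero s (σ.injective h)⟩,
    fun _ _ h => Fin.succ_injective _ (σ.injective (congrArg Subtype.val h))⟩⟩
  invFun p := ⟨Fin.cons p.1 (Subtype.val ∘ p.2), Fin.cons_injective_iff.2
    ⟨fun ⟨s, hs⟩ => (p.2 s).2 hs, Subtype.val_injective.comp p.2.injective⟩⟩
  left_inv σ := by
    ext s
    cases s using Fin.cases <;> rfl
  right_inv _ := rfl

noncomputable def centeredSampleSum {α : Type*} [Fintype α] (x : α → ℝ) {k : ℕ}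
    (σ : Fin k ↪ α) : ℝ :=
  ∑ s, x (σ s) - k * ((∑ a, x a) / Fintype.card α)

lemma centeredSampleSum_embeddingFinSuccSigma_symm {α : Type*} [Fintype α] [DecidableEq α]
    (x : α → ℝ) {k : ℕ} (a : α) (τ : Fin k ↪ {b // b ≠ a}) :
    centeredSampleSum x ((Equiv.embeddingFinSuccSigma k α).symm ⟨a, τ⟩) =
      centeredSampleSum (fun b : {b // b ≠ a} => x b) τ +
        (1 - k / (Fintype.card α - 1 : ℕ)) * (x a - (∑ b, x b) / Fintype.card α) := by
  have hcard : Fintype.card {b // b ≠ a} = Fintype.card α - 1 := by simp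
  have hk : k ≤ Fintype.card α - 1 := by
    simpa [hcard] using Fintype.card_le_of_embedding τ
  have hM : (Fintype.card α : ℝ) = (Fintype.card α - 1 : ℕ) + 1 := by
    have : 0 < Fintype.card α := Fintype.card_pos_iff.2 ⟨a⟩
    exact_mod_cast (Nat.sub_add_cancel this).symm
  simp only [centeredSampleSum, hM, hcard, Fin.sum_univ_succ,
    Fintype.sum_eq_add_sum_subtype_ne x a]
  change x a + ∑ s, x (τ s) - _ = _
  rcases Nat.eq_zero_or_pos k with rfl | hk0
  · push_cast
    ring
  · have hm : ((Fintype.card α - 1 : ℕ) : ℝ) ≠ 0 := by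
      have : 0 < Fintype.card α - 1 := by omega
      positivity
    field_simp
    push_cast
    ring

theorem sum_exp_mul_centeredSampleSum_le {α : Type*} [Fintype α] [DecidableEq α]
    {x : α → ℝ} {l u : ℝ} (hx : ∀ a, x a ∈ Set.Icc l u) (k : ℕ) (t : ℝ) :
    ∑ σ : Fin k ↪ α, exp (t * centeredSampleSum x σ) ≤
      Fintype.card (Fin k ↪ α) * exp (k * (u - l) ^ 2 * t ^ 2 / 8) := by
  induction k generalizing α with
  | zero => simp [centeredSampleSum]
  | succ k ih =>
    rcases isEmpty_or_nonempty (Fin (k + 1) ↪ α) with _ | hσ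
    · simp
    obtain ⟨σ⟩ := hσ
    have hk : k + 1 ≤ Fintype.card α := by simpa using Fintype.card_le_of_embedding σ
    set m := Fintype.card α - 1
    set c : ℝ := 1 - k / m
    set μ := (∑ a, x a) / Fintype.card α
    set E := exp (k * (u - l) ^ 2 * t ^ 2 / 8)
    have hcard (a : α) : Fintype.card (Fin k ↪ {b // b ≠ a}) = m.descFactorial k := by
      simp [Fintype.card_embedding_eq, m]
    have hc : (t * c) ^ 2 ≤ t ^ 2 := by
      have h1 : (k : ℝ) / m ≤ 1 := div_le_one_of_le₀ (by exact_mod_cast (by omega : k ≤ m))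
        (by positivity)
      have h0 : 0 ≤ (k : ℝ) / m := by positivity
      rw [mul_pow]
      exact mul_le_of_le_one_right (sq_nonneg t) (by nlinarith)
    calc ∑ σ : Fin (k + 1) ↪ α, exp (t * centeredSampleSum x σ)
        = ∑ a, exp (t * c * (x a - μ)) * ∑ τ : Fin k ↪ {b // b ≠ a},
            exp (t * centeredSampleSum (fun b : {b // b ≠ a} => x b) τ) := by
          rw [← (Equiv.embeddingFinSuccSigma k α).symm.sum_comp, Fintype.sum_sigma]
          simp only [centeredSampleSum_embeddingFinSuccSigma_symm, mul_sum, ← exp_add]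
          congr! 3
          ring
      _ ≤ ∑ a, exp (t * c * (x a - μ)) * (m.descFactorial k * E) := by
          gcongr with a
          simpa [hcard] using ih (x := fun b : {b // b ≠ a} => x b) (fun b => hx b)
      _ = (∑ a, exp (t * c * (x a - μ))) * (m.descFactorial k * E) := (sum_mul ..).symm
      _ ≤ (Fintype.card α * exp ((u - l) ^ 2 * (t * c) ^ 2 / 8)) * (m.descFactorial k * E) := by
          gcongr
          exact sum_exp_mul_sub_mean_le_of_mem_Icc hx (t * c)
      _ ≤ (Fintype.card α * exp ((u - l) ^ 2 * t ^ 2 / 8)) * (m.descFactorial k * E) := by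
          gcongr
      _ = Fintype.card (Fin (k + 1) ↪ α) * exp ((k + 1 : ℕ) * (u - l) ^ 2 * t ^ 2 / 8) := by
          have hM : Fintype.card α = m + 1 := by omega
          rw [Fintype.card_embedding_eq, Fintype.card_fin, hM, Nat.succ_descFactorial_succ]
          push_cast
          rw [show ((k : ℝ) + 1) * (u - l) ^ 2 * t ^ 2 / 8 =
            (u - l) ^ 2 * t ^ 2 / 8 + k * (u - l) ^ 2 * t ^ 2 / 8 by ring, exp_add]
          ring

theorem hoeffding_sampling_without_replacement_general
    (N n : ℕ) (hn : 1 ≤ n)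
    (x : Fin N → ℝ) (hx : ∀ i, x i ∈ Set.Icc (0 : ℝ) 1)
    (ε : ℝ) (hε : 0 < ε) :
    (Nat.card {σ : Fin n ↪ Fin N //
        ε ≤ |(∑ t, x (σ t)) / n - (∑ i, x i) / N|} : ℝ) /
      (Nat.card (Fin n ↪ Fin N) : ℝ)
      ≤ 2 * Real.exp (-2 * n * ε ^ 2) := by
  have hn0 : (0 : ℝ) < n := by exact_mod_cast hn
  have hevent (σ : Fin n ↪ Fin N) :
      ε ≤ |(∑ t, x (σ t)) / n - (∑ i, x i) / N| ↔ n * ε ≤ |centeredSampleSum x σ| := by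
    rw [centeredSampleSum, Fintype.card_fin, ← le_div_iff₀' hn0, ← abs_of_pos hn0, ← abs_div,
      abs_of_pos hn0, sub_div, mul_div_cancel_left₀ _ hn0.ne']
  have hmgf (t : ℝ) : ∑ σ : Fin n ↪ Fin N, exp (t * centeredSampleSum x σ) ≤
      Fintype.card (Fin n ↪ Fin N) * exp ((n / 4 : ℝ) * t ^ 2 / 2) := by
    convert sum_exp_mul_centeredSampleSum_le hx n t using 3
    ring
  rw [Nat.card_congr (Equiv.subtypeEquivRight hevent)]
  convert card_abs_ge_div_card_le_of_sum_exp_le (by positivity) hmgf (s := n * ε)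
    (by positivity) using 3
  field_simp
  ring

/-- **Hoeffding's inequality for sampling without replacement.**
`x : Fin N → ℝ` is a finite collection of numbers in `[0,1]` with mean `μ`.
A sample of size `n` drawn uniformly at random without replacement is modeled as a
uniformly random injection `σ : Fin n ↪ Fin N`; the probability of an event is the
fraction of injections realizing it.  Then for every `ε > 0`,
`Pr(|(1/n)∑ x (σ t) − μ| ≥ ε) ≤ 2 exp(−2 n ε²)`. -/
theorem hoeffding_sampling_without_replacement
    (N n : ℕ) (hn : 1 ≤ n) (hnN : n ≤ N)
    (x : Fin N → ℝ) (hx : ∀ i, x i ∈ Set.Icc (0 : ℝ) 1)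
    (ε : ℝ) (hε : 0 < ε) :
    (Nat.card {σ : Fin n ↪ Fin N //
        ε ≤ |(∑ t, x (σ t)) / n - (∑ i, x i) / N|} : ℝ) /
      (Nat.card (Fin n ↪ Fin N) : ℝ)
      ≤ 2 * Real.exp (-2 * n * ε ^ 2) :=
  hoeffding_sampling_without_replacement_general N n hn x hx ε hε
end

section
/- Let N_1, ..., N_n be subsets of a finite set E, and let E_0 ⊆ E be sampled uniformly at random without replacement from E with |E_0| = m. Then for every δ ∈ (0,1), every Q > 0, and every θ ≥ 2·max{Q, 4·ln(n/δ)}, if |E| ≥ m ≥ (2|E|/θ)·max{Q, 4·ln(n/δ)}, then Pr(∃ i : |N_i| ≥ θ and |N_i ∩ E_0| < Q) ≤ δ. -/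
open Finset

/-!
For a fixed set `N`, `|N ∩ E₀|` is hypergeometric, and its generating function `𝔼 z^|N ∩ E₀|`
(`z ≥ 0`) is dominated by the binomial one, `(1 - (1 - z)|N|/|E|)^m`. This is proved by
induction on `E`: removing a point outside `N` and applying Pascal's rule reduces the step to
Bernoulli's inequality. Markov's inequality at `z = 1/2` gives the Chernoff bound
`Pr(|N ∩ E₀| < Q) ≤ 2^Q exp(-|N| m / (2|E|))`. When `|N| ≥ θ`, the hypotheses bound the
exponent by `(3/4 - 1) max{Q, 4 ln(n/δ)} ≤ -ln(n/δ)` because `ln 2 ≤ 3/4`, and a union bound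
over the `n` sets finishes the proof.
-/

namespace Finset

variable {α : Type*} [DecidableEq α]

theorem sum_powersetCard_succ_insert {β : Type*} [AddCommMonoid β] {x : α} {s : Finset α}
    (hx : x ∉ s) (m : ℕ) (f : Finset α → β) :
    ∑ S ∈ (insert x s).powersetCard (m + 1), f S =
      ∑ S ∈ s.powersetCard (m + 1), f S + ∑ S ∈ s.powersetCard m, f (insert x S) := by
  have hxS : ∀ S ∈ s.powersetCard m, x ∉ S := fun S hS hxS =>
    hx ((mem_powersetCard.1 hS).1 hxS)
  rw [powersetCard_succ_insert hx, sum_union, sum_image]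
  · exact fun S hS T hT hST => by
      rw [← erase_insert (hxS S hS), ← erase_insert (hxS T hT), hST]
  · refine disjoint_left.2 fun S hS hS' => ?_
    obtain ⟨T, -, rfl⟩ := mem_image.1 hS'
    exact hx ((mem_powersetCard.1 hS).1 (mem_insert_self x T))

end Finset

theorem Nat.card_subtype_mem_and_eq_card_filter {β : Type*} (s : Finset β) (p : β → Prop)
    [DecidablePred p] : Nat.card {x // x ∈ s ∧ p x} = #{x ∈ s | p x} := by
  rw [← Nat.card_eq_finsetCard]
  exact Nat.card_congr (Equiv.subtypeEquivRight fun x => mem_filter.symm)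

theorem Finset.card_filter_exists_le_sum {ι β : Type*} [Fintype ι] (s : Finset β)
    (p : ι → β → Prop) [∀ i, DecidablePred (p i)] [DecidablePred fun x => ∃ i, p i x] :
    #{x ∈ s | ∃ i, p i x} ≤ ∑ i, #{x ∈ s | p i x} := by
  classical
  refine (card_le_card fun x hx => ?_).trans card_biUnion_le
  obtain ⟨hxs, i, hi⟩ := mem_filter.1 hx
  exact mem_biUnion.2 ⟨i, mem_univ i, mem_filter.2 ⟨hxs, hi⟩⟩

theorem card_filter_lt_mul_rpow_le_sum {ι : Type*} (s : Finset ι) (f : ι → ℕ) {b : ℝ}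
    (hb0 : 0 < b) (hb1 : b ≤ 1) (Q : ℝ) :
    #{i ∈ s | (f i : ℝ) < Q} * b ^ Q ≤ ∑ i ∈ s, b ^ f i := by
  calc #{i ∈ s | (f i : ℝ) < Q} * b ^ Q = ∑ i ∈ s with (f i : ℝ) < Q, b ^ Q := by
        rw [sum_const, nsmul_eq_mul]
    _ ≤ ∑ i ∈ s with (f i : ℝ) < Q, b ^ f i := sum_le_sum fun i hi => by
        rw [← Real.rpow_natCast]
        exact Real.rpow_le_rpow_of_exponent_ge hb0 hb1 (mem_filter.1 hi).2.le
    _ ≤ ∑ i ∈ s, b ^ f i := sum_le_sum_of_subset_of_nonneg (filter_subset _ _)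
        fun i _ _ => by positivity

theorem choose_mul_pow_add_choose_mul_pow_le {z : ℝ} (hz : 0 ≤ z) {t c : ℕ} (htc : t ≤ c)
    (m : ℕ) :
    (c.choose (m + 1) : ℝ) * (1 - (1 - z) * t / c) ^ (m + 1)
        + c.choose m * (1 - (1 - z) * t / c) ^ m
      ≤ (c + 1).choose (m + 1) * (1 - (1 - z) * t / (c + 1)) ^ (m + 1) := by
  set x := 1 - (1 - z) * t / c with hx
  have hx0 : 0 ≤ x := by
    have : (1 - z) * t ≤ c := by
      have : (t : ℝ) ≤ c := by exact_mod_cast htc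
      nlinarith [mul_nonneg hz (Nat.cast_nonneg t : (0 : ℝ) ≤ t)]
    linarith [div_le_one_of_le₀ this (Nat.cast_nonneg c)]
  have hc1 : (0 : ℝ) < c + 1 := by positivity
  have hshift : 1 - (1 - z) * t / (c + 1) = x + (1 - x) / (c + 1) := by
    rcases Nat.eq_zero_or_pos c with rfl | hc
    · obtain rfl : t = 0 := by omega
      simp [hx]
    · have : (0 : ℝ) < c := by exact_mod_cast hc
      rw [hx]
      field_simp
      ring
  have hpascal : ((c + 1).choose (m + 1) : ℝ) = c.choose m + c.choose (m + 1) := by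
    exact_mod_cast Nat.choose_succ_succ c m
  have habsorb : ((c + 1).choose (m + 1) : ℝ) * (m + 1) / (c + 1) = c.choose m := by
    rw [div_eq_iff hc1.ne']
    exact_mod_cast (Nat.add_one_mul_choose_eq c m).symm.trans (mul_comm _ _)
  have hbernoulli : x ^ (m + 1) + (m + 1) * x ^ m * ((1 - x) / (c + 1)) ≤
      (x + (1 - x) / (c + 1)) ^ (m + 1) := by
    have h2 : 0 ≤ 2 * x + (1 - x) / (c + 1) := by
      rw [show 2 * x + (1 - x) / (c + 1) = (x * (2 * c + 1) + 1) / (c + 1) by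
        field_simp; ring]
      positivity
    simpa using pow_add_mul_le_add_pow hx0 h2 (m + 1)
  rw [hshift]
  calc (c.choose (m + 1) : ℝ) * x ^ (m + 1) + c.choose m * x ^ m
      = (c + 1).choose (m + 1) * (x ^ (m + 1) + (m + 1) * x ^ m * ((1 - x) / (c + 1))) := by
        linear_combination (-x ^ (m + 1)) * hpascal - x ^ m * (1 - x) * habsorb
    _ ≤ _ := by gcongr

section Sampling

variable {α : Type*} [DecidableEq α] {N E : Finset α}

theorem sum_powersetCard_pow_card_inter_le {z : ℝ} (hz : 0 ≤ z) (hNE : N ⊆ E) (m : ℕ) :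
    ∑ S ∈ E.powersetCard m, z ^ #(N ∩ S) ≤ (#E).choose m * (1 - (1 - z) * #N / #E) ^ m := by
  induction E using Finset.strongInduction generalizing m with
  | H E ih =>
  obtain rfl | hssub := hNE.eq_or_ssubset
  · obtain rfl | hN := N.eq_empty_or_nonempty
    · simp
    have hcard : ∀ S ∈ N.powersetCard m, z ^ #(N ∩ S) = z ^ m := fun S hS => by
      rw [inter_eq_right.2 (mem_powersetCard.1 hS).1, (mem_powersetCard.1 hS).2]
    have : (0 : ℝ) < #N := by exact_mod_cast hN.card_pos
    rw [sum_congr rfl hcard, sum_const, card_powersetCard, nsmul_eq_mul,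
      mul_div_cancel_right₀ _ this.ne', sub_sub_cancel]
  obtain ⟨x, hxE, hxN⟩ := exists_of_ssubset hssub
  have hxE' : x ∉ E.erase x := notMem_erase x E
  have hNE' : N ⊆ E.erase x := subset_erase.2 ⟨hNE, hxN⟩
  cases m with
  | zero => simp
  | succ m =>
    rw [← insert_erase hxE, sum_powersetCard_succ_insert hxE', card_insert_of_notMem hxE']
    simp_rw [inter_insert_of_notMem hxN]
    calc _ ≤ _ := add_le_add (ih _ (erase_ssubset hxE) hNE' (m + 1))
          (ih _ (erase_ssubset hxE) hNE' m)
      _ ≤ _ := by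
        exact_mod_cast choose_mul_pow_add_choose_mul_pow_le hz (card_le_card hNE') m

theorem card_filter_card_inter_lt_le (hNE : N ⊆ E) (m : ℕ) (Q : ℝ) :
    (#{S ∈ E.powersetCard m | (#(N ∩ S) : ℝ) < Q} : ℝ) ≤
      (#E).choose m * Real.exp (Q * Real.log 2 - #N * m / (2 * #E)) := by
  have hmarkov := card_filter_lt_mul_rpow_le_sum (E.powersetCard m) (fun S => #(N ∩ S))
    (b := 1 / 2) (by norm_num) (by norm_num) Q
  have hmgf := sum_powersetCard_pow_card_inter_le (z := 1 / 2) (by norm_num) hNE m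
  have hbase : 0 ≤ 1 - (1 - 1 / 2 : ℝ) * #N / #E := by
    have : (#N : ℝ) ≤ #E := by exact_mod_cast card_le_card hNE
    linarith [div_le_one_of_le₀ (by linarith : (1 - 1 / 2 : ℝ) * #N ≤ #E) (Nat.cast_nonneg _)]
  have hexp : (1 - (1 - 1 / 2 : ℝ) * #N / #E) ^ m ≤ Real.exp (-(#N * m / (2 * #E))) := by
    calc _ ≤ Real.exp (-((1 - 1 / 2 : ℝ) * #N / #E)) ^ m :=
          pow_le_pow_left₀ hbase (Real.one_sub_le_exp_neg _) m
      _ = _ := by rw [← Real.exp_nat_mul]; ring_nf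
  have hhalf : (1 / 2 : ℝ) ^ Q = Real.exp (-(Q * Real.log 2)) := by
    rw [Real.rpow_def_of_pos (by norm_num), one_div, Real.log_inv]; ring_nf
  have htail := hmarkov.trans hmgf
  rw [hhalf, Real.exp_neg, ← div_eq_mul_inv, div_le_iff₀ (Real.exp_pos _)] at htail
  calc _ ≤ _ := htail
    _ ≤ (#E).choose m * Real.exp (-(#N * m / (2 * #E))) * Real.exp (Q * Real.log 2) := by
        gcongr
    _ = _ := by rw [mul_assoc, ← Real.exp_add]; ring_nf

theorem card_filter_card_inter_lt_le_exp_neg (hNE : N ⊆ E) {m : ℕ} {Q θ L : ℝ} (hQ : 0 ≤ Q)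
    (hθ : 0 < θ) (hNθ : θ ≤ #N) (hm : 2 * #E / θ * max Q (4 * L) ≤ m) :
    (#{S ∈ E.powersetCard m | (#(N ∩ S) : ℝ) < Q} : ℝ) ≤ (#E).choose m * Real.exp (-L) := by
  refine (card_filter_card_inter_lt_le hNE m Q).trans ?_
  gcongr
  set M := max Q (4 * L)
  have hE : (0 : ℝ) < #E := hθ.trans_le (hNθ.trans (by exact_mod_cast card_le_card hNE))
  have hM : M ≤ #N * m / (2 * #E) := by
    rw [le_div_iff₀ (by positivity)]
    rw [div_mul_eq_mul_div, div_le_iff₀ hθ] at hm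
    nlinarith [Nat.cast_nonneg (α := ℝ) m]
  have hlog2 : Q * Real.log 2 ≤ 3 / 4 * Q := by
    nlinarith [Real.log_two_lt_d9]
  linarith [le_max_left Q (4 * L), le_max_right Q (4 * L)]

theorem card_filter_le_card_and_card_inter_lt_le_exp_neg (hNE : N ⊆ E) {m : ℕ} {Q θ L : ℝ}
    (hQ : 0 ≤ Q) (hθ : 0 < θ) (hm : 2 * #E / θ * max Q (4 * L) ≤ m) :
    (#{S ∈ E.powersetCard m | θ ≤ #N ∧ (#(N ∩ S) : ℝ) < Q} : ℝ) ≤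
      (#E).choose m * Real.exp (-L) := by
  by_cases hNθ : θ ≤ #N
  · calc _ ≤ (#{S ∈ E.powersetCard m | (#(N ∩ S) : ℝ) < Q} : ℝ) := by
          exact_mod_cast card_le_card (monotone_filter_right _ fun _ _ => And.right)
      _ ≤ _ := card_filter_card_inter_lt_le_exp_neg hNE hQ hθ hNθ hm
  · simp only [hNθ, false_and, filter_false, card_empty, CharP.cast_eq_zero]
    positivity

end Sampling

theorem sampling_hits_all_large_sets_general
    {α : Type*} [DecidableEq α]
    (E : Finset α) (n : ℕ) (Nsets : Fin n → Finset α) (hsub : ∀ i, Nsets i ⊆ E)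
    (m : ℕ) (δ Q θ : ℝ)
    (hδ : δ ∈ Set.Ioo (0 : ℝ) 1) (hQpos : 0 < Q)
    (hθ : 2 * max Q (4 * Real.log ((n : ℝ) / δ)) ≤ θ)
    (hm : (2 * (E.card : ℝ) / θ) * max Q (4 * Real.log ((n : ℝ) / δ)) ≤ (m : ℝ)) :
    (Nat.card {S : Finset α // S ∈ E.powersetCard m ∧
        ∃ i, θ ≤ ((Nsets i).card : ℝ) ∧ (((Nsets i) ∩ S).card : ℝ) < Q} : ℝ) /
      (Nat.card {S : Finset α // S ∈ E.powersetCard m} : ℝ)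
      ≤ δ := by
  obtain ⟨hδ0, -⟩ := hδ
  have hθ0 : 0 < θ := by linarith [le_max_left Q (4 * Real.log (n / δ))]
  rw [Nat.card_subtype_mem_and_eq_card_filter, Nat.card_eq_finsetCard, card_powersetCard]
  refine div_le_of_le_mul₀ (Nat.cast_nonneg _) hδ0.le ?_
  rcases n.eq_zero_or_pos with rfl | hn
  · simp only [IsEmpty.exists_iff, filter_false, card_empty, CharP.cast_eq_zero]
    positivity
  have hn' : (0 : ℝ) < n := by exact_mod_cast hn
  calc _ ≤ ∑ i, (#{S ∈ E.powersetCard m | θ ≤ #(Nsets i) ∧ (#(Nsets i ∩ S) : ℝ) < Q} : ℝ) := by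
        exact_mod_cast card_filter_exists_le_sum (E.powersetCard m)
          fun i S => θ ≤ #(Nsets i) ∧ (#(Nsets i ∩ S) : ℝ) < Q
    _ ≤ ∑ _i : Fin n, (#E).choose m * Real.exp (-Real.log (n / δ)) := sum_le_sum fun i _ =>
        card_filter_le_card_and_card_inter_lt_le_exp_neg (hsub i) hQpos.le hθ0 hm
    _ = δ * (#E).choose m := by
        rw [Real.exp_neg, Real.exp_log (div_pos hn' hδ0), inv_div, sum_const, card_univ,
          Fintype.card_fin, nsmul_eq_mul]
        field_simp

/-- **Lemma 2 of the paper.**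
`N₁, …, Nₙ` are subsets of a finite set `E`, and `E₀` is a uniformly random `m`-subset
of `E` (sampling without replacement), modeled as a uniformly random element of
`E.powersetCard m`; the probability of an event is the fraction of `m`-subsets
realizing it.  For every `δ ∈ (0,1)`, `Q > 0` and `θ ≥ 2·max{Q, 4·ln(n/δ)}`, if
`|E| ≥ m ≥ (2|E|/θ)·max{Q, 4·ln(n/δ)}`, then
`Pr(∃ i, |Nᵢ| ≥ θ ∧ |Nᵢ ∩ E₀| < Q) ≤ δ`. -/
theorem sampling_hits_all_large_sets
    {α : Type*} [Fintype α] [DecidableEq α]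
    (E : Finset α) (n : ℕ) (Nsets : Fin n → Finset α) (hsub : ∀ i, Nsets i ⊆ E)
    (m : ℕ) (δ Q θ : ℝ)
    (hδ : δ ∈ Set.Ioo (0 : ℝ) 1) (hQpos : 0 < Q)
    (hθ : 2 * max Q (4 * Real.log ((n : ℝ) / δ)) ≤ θ)
    (hmE : m ≤ E.card)
    (hm : (2 * (E.card : ℝ) / θ) * max Q (4 * Real.log ((n : ℝ) / δ)) ≤ (m : ℝ)) :
    (Nat.card {S : Finset α // S ∈ E.powersetCard m ∧
        ∃ i, θ ≤ ((Nsets i).card : ℝ) ∧ (((Nsets i) ∩ S).card : ℝ) < Q} : ℝ) /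
      (Nat.card {S : Finset α // S ∈ E.powersetCard m} : ℝ)
      ≤ δ :=
  sampling_hits_all_large_sets_general E n Nsets hsub m δ Q θ hδ hQpos hθ hm
end

section
/- Let i be a node of a finite directed graph G = (V, E) whose out-neighbors j ∈ N_out(i) carry fixed parameters q_j ∈ [0,1], and let p_i ∈ [0,1]. Suppose a subset of Q edges J_1, ..., J_Q is drawn uniformly at random without replacement from E_out(i), and conditionally on the draw each label y_{i,J_t} ∈ {−1,+1} is independently +1 with probability (p_i + q_{J_t})/2. Let δ̂_out(i) = (1/Q)·Σ_{t=1}^Q 1[y_{i,J_t} = 1] and let μ_p(i) = (p_i + q̄_i)/2 where q̄_i = (1/d_out(i))·Σ_{j ∈ N_out(i)} q_j. If Q = (1/(2ε²))·ln(4|V|/δ) for some ε > 0 and δ ∈ (0,1), then Pr(|δ̂_out(i) − μ_p(i)| > 2ε) ≤ δ/|V|. -/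
open MeasureTheory Finset
open ProbabilityTheory Real
open scoped BigOperators

/-!
Let `ḡ` be the mean of `g j = (p + q j)/2` over `N_out(i)`. The centred count of positive labels
splits as `∑ₜ (y_t - g(J_t)) + (∑ₜ g(J_t) - Q ḡ)`. Given the sample, the first sum has independent
centred Bernoulli summands. The second is a Doob martingale for sampling without replacement:
when the first of `k + 1` draws from a population `A` is `j`, its conditional mean moves by
`(1 - k/(|A| - 1)) (g j - mean_A g)`, a centred quantity of range at most one. Hoeffding's lemma
bounds each of the `2Q` resulting factors of the moment generating function by `exp (λ²/8)`,
and the Chernoff bound with `λ = 2τ` gives `Pr(|δ̂_out(i) - ḡ| > τ) ≤ 2 exp (-Q τ²)`, which is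
at most `δ/(2|V|)` for `τ = 2ε`.
-/

theorem sum_mul_exp_le_of_mem_Icc {ι : Type*} (s : Finset ι) {w v : ι → ℝ} {a b : ℝ}
    (hw : ∀ i ∈ s, 0 ≤ w i) (hw_sum : ∑ i ∈ s, w i = 1) (hv : ∀ i ∈ s, v i ∈ Set.Icc a b)
    (hmean : ∑ i ∈ s, w i * v i = 0) (l : ℝ) :
    ∑ i ∈ s, w i * exp (l * v i) ≤ exp ((b - a) ^ 2 * l ^ 2 / 8) := by
  let _ : MeasurableSpace s := ⊤
  have : DiscreteMeasurableSpace s := ⟨fun _ => trivial⟩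
  let P : PMF s := PMF.ofFintype (fun i => ENNReal.ofReal (w i)) (by
    rw [← ENNReal.ofReal_sum_of_nonneg fun (i : s) _ => hw i i.2, sum_coe_sort s w, hw_sum,
      ENNReal.ofReal_one])
  have hP (f : ι → ℝ) : ∫ i : s, f i ∂P.toMeasure = ∑ i ∈ s, w i * f i := by
    rw [PMF.integral_eq_sum, ← sum_coe_sort s]
    refine sum_congr rfl fun i _ => ?_
    simp [P, PMF.ofFintype_apply, ENNReal.toReal_ofReal (hw i i.2)]
  obtain ⟨i₀, hi₀⟩ := s.nonempty_of_sum_ne_zero (hw_sum ▸ one_ne_zero)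
  have hab : a ≤ b := (hv i₀ hi₀).1.trans (hv i₀ hi₀).2
  have hhoeffding := hasSubgaussianMGF_of_mem_Icc_of_integral_eq_zero (μ := P.toMeasure)
    Measurable.of_discrete.aemeasurable (ae_of_all _ fun i : s => hv i i.2) ((hP v).trans hmean)
  calc ∑ i ∈ s, w i * exp (l * v i) = mgf (fun i : s => v i) P.toMeasure l := by
        rw [mgf, hP fun i => exp (l * v i)]
    _ ≤ _ := hhoeffding.mgf_le l
    _ = exp ((b - a) ^ 2 * l ^ 2 / 8) := by
        rw [NNReal.coe_pow, NNReal.coe_div, coe_nnnorm, Real.norm_of_nonneg (sub_nonneg.2 hab)]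
        congr 1
        push_cast
        ring

section Bernoulli

variable {ι : Type*} [Fintype ι]

def bernoulliProb (r : ι → ℝ) (y : ι → Bool) : ℝ := ∏ t, if y t then r t else 1 - r t

def numTrue (y : ι → Bool) : ℝ := ∑ t, if y t then 1 else 0

lemma bernoulliProb_nonneg {r : ι → ℝ} (hr : ∀ t, r t ∈ Set.Icc (0 : ℝ) 1) (y : ι → Bool) :
    0 ≤ bernoulliProb r y :=
  prod_nonneg fun t _ => by split_ifs <;> linarith [(hr t).1, (hr t).2]

theorem sum_bernoulliProb_mul_exp_le [DecidableEq ι] {r : ι → ℝ}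
    (hr : ∀ t, r t ∈ Set.Icc (0 : ℝ) 1) (l : ℝ) :
    ∑ y, bernoulliProb r y * exp (l * (numTrue y - ∑ t, r t))
      ≤ exp (l ^ 2 * Fintype.card ι / 8) := by
  set φ : ι → Bool → ℝ := fun t b =>
    (if b then r t else 1 - r t) * exp (l * ((if b then 1 else 0) - r t))
  have hφ_nonneg (t : ι) (b : Bool) : 0 ≤ φ t b :=
    mul_nonneg (by split_ifs <;> linarith [(hr t).1, (hr t).2]) (exp_pos _).le
  have hφ_le (t : ι) : ∑ b, φ t b ≤ exp (l ^ 2 / 8) := by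
    have := sum_mul_exp_le_of_mem_Icc (w := fun b : Bool => if b then r t else 1 - r t)
      (v := fun b : Bool => (if b then 1 else 0) - r t) (a := -r t) (b := 1 - r t) univ
      (fun b _ => by cases b <;> simp <;> linarith [(hr t).1, (hr t).2]) (by simp)
      (fun b _ => by cases b <;> simp) (by simp; ring) l
    simpa [φ] using this
  calc ∑ y, bernoulliProb r y * exp (l * (numTrue y - ∑ t, r t)) = ∏ t, ∑ b, φ t b := by
        rw [Fintype.prod_sum]
        refine sum_congr rfl fun y _ => ?_
        simp only [φ, bernoulliProb, numTrue, prod_mul_distrib, ← sum_sub_distrib, mul_sum,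
          exp_sum]
    _ ≤ ∏ _t : ι, exp (l ^ 2 / 8) :=
        prod_le_prod (fun t _ => sum_nonneg fun b _ => hφ_nonneg t b) fun t _ => hφ_le t
    _ = exp (l ^ 2 * Fintype.card ι / 8) := by
        rw [prod_const, ← exp_nat_mul, card_univ]
        ring_nf

end Bernoulli

section Sampling

variable {α : Type*} [DecidableEq α]

def injTuples (k : ℕ) (A : Finset α) : Finset (Fin k → α) :=
  (Fintype.piFinset fun _ => A).filter Function.Injective

lemma mem_injTuples {k : ℕ} {A : Finset α} {f : Fin k → α} :
    f ∈ injTuples k A ↔ (∀ t, f t ∈ A) ∧ Function.Injective f := by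
  simp [injTuples]

lemma sum_injTuples_succ {M : Type*} [AddCommMonoid M] (k : ℕ) (A : Finset α)
    (φ : (Fin (k + 1) → α) → M) :
    ∑ f ∈ injTuples (k + 1) A, φ f
      = ∑ j ∈ A, ∑ f ∈ injTuples k (A.erase j), φ (Fin.cons j f) := by
  rw [sum_sigma']
  refine sum_bij' (fun f _ => ⟨f 0, Fin.tail f⟩) (fun f _ => Fin.cons f.1 f.2) ?_ ?_ ?_ ?_ ?_
  · intro f hf
    obtain ⟨hA, hinj⟩ := mem_injTuples.1 hf
    refine mem_sigma.2 ⟨hA 0, mem_injTuples.2 ⟨fun t => mem_erase.2 ⟨?_, hA _⟩, ?_⟩⟩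
    · exact fun h => Fin.succ_ne_zero t (hinj h)
    · exact hinj.comp (Fin.succ_injective _)
  · rintro ⟨j, f⟩ hf
    obtain ⟨hj, hf⟩ := mem_sigma.1 hf
    obtain ⟨hA, hinj⟩ := mem_injTuples.1 hf
    refine mem_injTuples.2 ⟨Fin.cases hj fun t => mem_of_mem_erase (hA t), ?_⟩
    exact Fin.cons_injective_iff.2 ⟨fun ⟨t, ht⟩ => (mem_erase.1 (hA t)).1 ht, hinj⟩
  · exact fun f _ => Fin.cons_self_tail f
  · exact fun _ _ => rfl
  · exact fun f _ => by simp only [Fin.cons_self_tail]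

lemma card_injTuples (k : ℕ) (A : Finset α) : #(injTuples k A) = (#A).descFactorial k := by
  induction k generalizing A with
  | zero => simp [injTuples, Function.injective_of_subsingleton]
  | succ k ih =>
    rw [card_eq_sum_ones, sum_injTuples_succ]
    simp only [← card_eq_sum_ones, ih]
    rw [sum_congr rfl fun j hj => by rw [card_erase_of_mem hj], sum_const, smul_eq_mul]
    cases #A with
    | zero => simp
    | succ n => rw [Nat.succ_descFactorial_succ, Nat.add_sub_cancel]

lemma expect_erase_of_mem {K : Type*} [Field K] [CharZero K] {A : Finset α} {j : α}
    (hj : j ∈ A) (g : α → K) : 𝔼 i ∈ A.erase j, g i = ((∑ i ∈ A, g i) - g j) / (#A - 1) := by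
  rw [expect_eq_sum_div_card, sum_erase_eq_sub hj, card_erase_of_mem hj,
    Nat.cast_sub (card_pos.2 ⟨j, hj⟩), Nat.cast_one]

theorem sum_exp_doob_increment_le {g : α → ℝ} {A : Finset α}
    (hg : ∀ j ∈ A, g j ∈ Set.Icc (0 : ℝ) 1) {k : ℕ} (hk : k + 1 ≤ #A) (l : ℝ) :
    ∑ j ∈ A, exp (l * (g j + k * 𝔼 i ∈ A.erase j, g i - (k + 1) * 𝔼 i ∈ A, g i))
      ≤ #A * exp (l ^ 2 / 8) := by
  set m := 𝔼 i ∈ A, g i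
  set θ : ℝ := 1 - k / (#A - 1)
  have hkA : (k : ℝ) + 1 ≤ #A := by exact_mod_cast hk
  have hA : (0 : ℝ) < #A := by linarith [(Nat.cast_nonneg k : (0 : ℝ) ≤ k)]
  have hθ : θ ∈ Set.Icc (0 : ℝ) 1 := by
    rcases Nat.eq_zero_or_pos k with rfl | hk0
    · simp [θ]
    · have : (0 : ℝ) < k := by exact_mod_cast hk0
      constructor
      · rw [sub_nonneg, div_le_one (by linarith)]; linarith
      · have := div_nonneg this.le (by linarith : (0 : ℝ) ≤ #A - 1); linarith
  have hincrement (j : α) (hj : j ∈ A) :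
      g j + k * 𝔼 i ∈ A.erase j, g i - (k + 1) * m = θ * (g j - m) := by
    rw [expect_erase_of_mem hj, show m = (∑ i ∈ A, g i) / #A from expect_eq_sum_div_card _ _]
    rcases Nat.eq_zero_or_pos k with rfl | hk0
    · simp [θ]
    · have : (0 : ℝ) < k := by exact_mod_cast hk0
      have : (#A : ℝ) - 1 ≠ 0 := by linarith
      simp only [θ]
      field_simp
      ring
  have hhoeffding := sum_mul_exp_le_of_mem_Icc A (w := fun _ => 1 / (#A : ℝ))
    (v := fun j => θ * (g j - m)) (a := θ * (0 - m)) (b := θ * (1 - m)) (fun _ _ => by positivity)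
    (by rw [sum_const, nsmul_eq_mul]; field_simp)
    (fun j hj => ⟨mul_le_mul_of_nonneg_left (by linarith [(hg j hj).1]) hθ.1,
      mul_le_mul_of_nonneg_left (by linarith [(hg j hj).2]) hθ.1⟩)
    (by rw [← mul_sum, ← mul_sum, sum_sub_distrib, sum_const, nsmul_eq_mul, card_mul_expect]; ring)
    l
  rw [← mul_sum, show θ * (1 - m) - θ * (0 - m) = θ by ring] at hhoeffding
  rw [sum_congr rfl fun j hj => by rw [hincrement j hj]]
  calc ∑ j ∈ A, exp (l * (θ * (g j - m)))
      = #A * (1 / #A * ∑ j ∈ A, exp (l * (θ * (g j - m)))) := by field_simp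
    _ ≤ #A * exp (l ^ 2 / 8) := by
        gcongr
        refine hhoeffding.trans (exp_le_exp.2 ?_)
        have : θ ^ 2 ≤ 1 := by nlinarith [hθ.1, hθ.2]
        nlinarith [sq_nonneg l]

theorem sum_injTuples_exp_le {g : α → ℝ} (l : ℝ) (k : ℕ) {A : Finset α}
    (hg : ∀ j ∈ A, g j ∈ Set.Icc (0 : ℝ) 1) (hk : k ≤ #A) :
    ∑ f ∈ injTuples k A, exp (l * (∑ t, g (f t) - k * 𝔼 i ∈ A, g i))
      ≤ #(injTuples k A) * exp (l ^ 2 * k / 8) := by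
  induction k generalizing A with
  | zero => simp
  | succ k ih =>
    have hrest (j : α) (hj : j ∈ A) :
        ∑ f ∈ injTuples k (A.erase j), exp (l * (∑ t, g (f t) - k * 𝔼 i ∈ A.erase j, g i))
          ≤ (#A - 1).descFactorial k * exp (l ^ 2 * k / 8) := by
      have := ih (fun i hi => hg i (mem_of_mem_erase hi)) (by rw [card_erase_of_mem hj]; omega)
      rwa [card_injTuples, card_erase_of_mem hj] at this
    calc ∑ f ∈ injTuples (k + 1) A, exp (l * (∑ t, g (f t) - (k + 1 : ℕ) * 𝔼 i ∈ A, g i))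
        = ∑ j ∈ A, exp (l * (g j + k * 𝔼 i ∈ A.erase j, g i - (k + 1) * 𝔼 i ∈ A, g i)) *
            ∑ f ∈ injTuples k (A.erase j),
              exp (l * (∑ t, g (f t) - k * 𝔼 i ∈ A.erase j, g i)) := by
          rw [sum_injTuples_succ]
          refine sum_congr rfl fun j _ => ?_
          rw [mul_sum]
          refine sum_congr rfl fun f _ => ?_
          rw [← exp_add, Fin.sum_univ_succ]
          simp only [Fin.cons_zero, Fin.cons_succ]
          push_cast
          ring_nf
      _ ≤ ∑ j ∈ A, exp (l * (g j + k * 𝔼 i ∈ A.erase j, g i - (k + 1) * 𝔼 i ∈ A, g i)) *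
            ((#A - 1).descFactorial k * exp (l ^ 2 * k / 8)) :=
          sum_le_sum fun j hj => mul_le_mul_of_nonneg_left (hrest j hj) (exp_pos _).le
      _ ≤ #A * exp (l ^ 2 / 8) * ((#A - 1).descFactorial k * exp (l ^ 2 * k / 8)) := by
          rw [← sum_mul]
          gcongr
          exact sum_exp_doob_increment_le hg hk l
      _ = #(injTuples (k + 1) A) * exp (l ^ 2 * (k + 1 : ℕ) / 8) := by
          obtain ⟨n, hn⟩ : ∃ n, #A = n + 1 := ⟨#A - 1, by omega⟩
          rw [card_injTuples, hn, Nat.succ_descFactorial_succ, Nat.add_sub_cancel]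
          push_cast
          rw [show l ^ 2 * (k + 1) / 8 = l ^ 2 / 8 + l ^ 2 * k / 8 by ring, exp_add]
          ring

theorem sum_injTuples_sum_bernoulliProb_mul_exp_le {g : α → ℝ} {A : Finset α}
    (hg : ∀ j ∈ A, g j ∈ Set.Icc (0 : ℝ) 1) {k : ℕ} (hk : k ≤ #A) (l : ℝ) :
    ∑ f ∈ injTuples k A, ∑ y, bernoulliProb (g ∘ f) y * exp (l * (numTrue y - k * 𝔼 i ∈ A, g i))
      ≤ #(injTuples k A) * exp (l ^ 2 * k / 4) := by
  have hlabels (f : Fin k → α) (hf : f ∈ injTuples k A) :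
      ∑ y, bernoulliProb (g ∘ f) y * exp (l * (numTrue y - k * 𝔼 i ∈ A, g i))
        ≤ exp (l * (∑ t, g (f t) - k * 𝔼 i ∈ A, g i)) * exp (l ^ 2 * k / 8) := by
    have := sum_bernoulliProb_mul_exp_le (fun t => hg _ ((mem_injTuples.1 hf).1 t)) l
    rw [Fintype.card_fin] at this
    calc ∑ y, bernoulliProb (g ∘ f) y * exp (l * (numTrue y - k * 𝔼 i ∈ A, g i))
        = exp (l * (∑ t, g (f t) - k * 𝔼 i ∈ A, g i)) *
            ∑ y, bernoulliProb (g ∘ f) y * exp (l * (numTrue y - ∑ t, (g ∘ f) t)) := by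
          rw [mul_sum]
          refine sum_congr rfl fun y _ => ?_
          rw [mul_left_comm, ← exp_add]
          simp only [Function.comp_apply]
          ring_nf
      _ ≤ _ := mul_le_mul_of_nonneg_left this (exp_pos _).le
  calc _ ≤ ∑ f ∈ injTuples k A,
          exp (l * (∑ t, g (f t) - k * 𝔼 i ∈ A, g i)) * exp (l ^ 2 * k / 8) :=
        sum_le_sum hlabels
    _ ≤ #(injTuples k A) * exp (l ^ 2 * k / 8) * exp (l ^ 2 * k / 8) := by
        rw [← sum_mul]
        gcongr
        exact sum_injTuples_exp_le l k hg hk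
    _ = #(injTuples k A) * exp (l ^ 2 * k / 4) := by
        rw [mul_assoc, ← exp_add]
        ring_nf

lemma le_exp_neg_mul_mul_add_of_le_abs {w a x l : ℝ} (hw : 0 ≤ w) (hl : 0 ≤ l) (hax : a ≤ |x|) :
    w ≤ exp (-(l * a)) * (w * exp (l * x) + w * exp (-l * x)) := by
  have hexp : exp (l * a) ≤ exp (l * x) + exp (-l * x) := by
    rcases le_abs'.1 hax with h | h
    · exact le_add_of_nonneg_of_le (exp_pos _).le (exp_le_exp.2 (by nlinarith))
    · exact le_add_of_le_of_nonneg (exp_le_exp.2 (by nlinarith)) (exp_pos _).le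
  calc w = exp (-(l * a)) * (w * exp (l * a)) := by rw [mul_left_comm, ← exp_add]; simp
    _ ≤ exp (-(l * a)) * (w * (exp (l * x) + exp (-l * x))) := by gcongr
    _ = _ := by ring

theorem sum_injTuples_sum_bernoulliProb_tail_le {g : α → ℝ} {A : Finset α}
    (hg : ∀ j ∈ A, g j ∈ Set.Icc (0 : ℝ) 1) {k : ℕ} (hk0 : 0 < k) (hk : k ≤ #A)
    {τ : ℝ} (hτ : 0 < τ) :
    ∑ f ∈ injTuples k A, ∑ y with τ < |numTrue y / k - 𝔼 i ∈ A, g i|, bernoulliProb (g ∘ f) y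
      ≤ #(injTuples k A) * (2 * exp (-(k * τ ^ 2))) := by
  set m := 𝔼 i ∈ A, g i
  set c := exp (-(2 * τ * (τ * k)))
  have hk' : (0 : ℝ) < k := by exact_mod_cast hk0
  have hchernoff (f : Fin k → α) (hf : f ∈ injTuples k A) (y : Fin k → Bool)
      (hy : τ < |numTrue y / k - m|) :
      bernoulliProb (g ∘ f) y ≤ c * (bernoulliProb (g ∘ f) y * exp (2 * τ * (numTrue y - k * m))
        + bernoulliProb (g ∘ f) y * exp (-(2 * τ) * (numTrue y - k * m))) := by
    refine le_exp_neg_mul_mul_add_of_le_abs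
      (bernoulliProb_nonneg (fun t => hg _ ((mem_injTuples.1 hf).1 t)) y) (by positivity) ?_
    rw [show numTrue y - k * m = (numTrue y / k - m) * k by field_simp, abs_mul, abs_of_pos hk']
    exact mul_le_mul_of_nonneg_right hy.le hk'.le
  calc ∑ f ∈ injTuples k A, ∑ y with τ < |numTrue y / k - m|, bernoulliProb (g ∘ f) y
      ≤ ∑ f ∈ injTuples k A, ∑ y, c * (bernoulliProb (g ∘ f) y * exp (2 * τ * (numTrue y - k * m))
          + bernoulliProb (g ∘ f) y * exp (-(2 * τ) * (numTrue y - k * m))) := by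
        refine sum_le_sum fun f hf => ?_
        refine (sum_le_sum fun y hy => hchernoff f hf y (mem_filter.1 hy).2).trans ?_
        refine sum_le_sum_of_subset_of_nonneg (filter_subset _ _) fun y _ _ => ?_
        have := bernoulliProb_nonneg (fun t => hg _ ((mem_injTuples.1 hf).1 t)) y
        positivity
    _ = c * (∑ f ∈ injTuples k A, ∑ y,
            bernoulliProb (g ∘ f) y * exp (2 * τ * (numTrue y - k * m))
          + ∑ f ∈ injTuples k A, ∑ y,
            bernoulliProb (g ∘ f) y * exp (-(2 * τ) * (numTrue y - k * m))) := by
        simp only [← mul_sum, sum_add_distrib]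
    _ ≤ c * (#(injTuples k A) * exp ((2 * τ) ^ 2 * k / 4)
          + #(injTuples k A) * exp ((-(2 * τ)) ^ 2 * k / 4)) := by
        gcongr <;> exact sum_injTuples_sum_bernoulliProb_mul_exp_le hg hk _
    _ = #(injTuples k A) * (2 * exp (-(k * τ ^ 2))) := by
        have : c * exp ((2 * τ) ^ 2 * k / 4) = exp (-(k * τ ^ 2)) := by
          rw [← exp_add]; ring_nf
        rw [neg_sq]
        linear_combination (2 * (#(injTuples k A) : ℝ)) * this

end Sampling

theorem measure_prod_le_sum_singleton {α β : Type*} [Fintype α] [MeasurableSpace α]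
    [MeasurableSpace β] (μ : Measure α) (ν : Measure β) [SFinite ν] (E : Set (α × β)) :
    μ.prod ν E ≤ ∑ a, μ {a} * ν (Prod.mk a ⁻¹' E) := by
  calc μ.prod ν E ≤ μ.prod ν (⋃ a, {a} ×ˢ (Prod.mk a ⁻¹' E)) :=
        measure_mono fun ω hω => Set.mem_iUnion.2 ⟨ω.1, rfl, hω⟩
    _ ≤ ∑ a, μ.prod ν ({a} ×ˢ (Prod.mk a ⁻¹' E)) := measure_iUnion_fintype_le _ _
    _ = ∑ a, μ {a} * ν (Prod.mk a ⁻¹' E) := by simp only [Measure.prod_prod]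

section Cube

lemma volume_restrict_Icc_Iio {r : ℝ} (hr : r ∈ Set.Icc (0 : ℝ) 1) :
    volume.restrict (Set.Icc (0 : ℝ) 1) (Set.Iio r) = ENNReal.ofReal r := by
  have : Set.Iio r ∩ Set.Icc 0 1 = Set.Ico 0 r := by
    ext x
    simp only [Set.mem_inter_iff, Set.mem_Iio, Set.mem_Icc, Set.mem_Ico]
    grind [hr.2]
  rw [Measure.restrict_apply measurableSet_Iio, this, Real.volume_Ico, sub_zero]

lemma volume_restrict_Icc_Ici {r : ℝ} (hr : r ∈ Set.Icc (0 : ℝ) 1) :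
    volume.restrict (Set.Icc (0 : ℝ) 1) (Set.Ici r) = ENNReal.ofReal (1 - r) := by
  have : Set.Ici r ∩ Set.Icc 0 1 = Set.Icc r 1 := by
    ext x
    simp only [Set.mem_inter_iff, Set.mem_Ici, Set.mem_Icc]
    grind [hr.1]
  rw [Measure.restrict_apply measurableSet_Ici, this, Real.volume_Icc]

variable {ι : Type*} [Fintype ι]

theorem pi_volume_labels_eq {r : ι → ℝ} (hr : ∀ t, r t ∈ Set.Icc (0 : ℝ) 1) (y : ι → Bool) :
    Measure.pi (fun _ : ι => volume.restrict (Set.Icc (0 : ℝ) 1))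
        {u | (fun t => decide (u t < r t)) = y} = ENNReal.ofReal (bernoulliProb r y) := by
  have hbox : {u : ι → ℝ | (fun t => decide (u t < r t)) = y}
      = Set.univ.pi fun t => if y t then Set.Iio (r t) else Set.Ici (r t) := by
    ext u
    simp only [Set.mem_ofPred_eq, funext_iff, Set.mem_univ_pi]
    refine forall_congr' fun t => ?_
    cases y t <;> simp
  rw [hbox, Measure.pi_pi, bernoulliProb, ENNReal.ofReal_prod_of_nonneg fun t _ => by
    split_ifs <;> linarith [(hr t).1, (hr t).2]]
  refine prod_congr rfl fun t _ => ?_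
  split_ifs
  · exact volume_restrict_Icc_Iio (hr t)
  · exact volume_restrict_Icc_Ici (hr t)

theorem pi_volume_labels_mem_le {r : ι → ℝ} (hr : ∀ t, r t ∈ Set.Icc (0 : ℝ) 1)
    (Y : Finset (ι → Bool)) :
    Measure.pi (fun _ : ι => volume.restrict (Set.Icc (0 : ℝ) 1))
        {u | (fun t => decide (u t < r t)) ∈ Y} ≤ ∑ y ∈ Y, ENNReal.ofReal (bernoulliProb r y) := by
  calc _ ≤ Measure.pi (fun _ : ι => volume.restrict (Set.Icc (0 : ℝ) 1))
        (⋃ y ∈ Y, {u | (fun t => decide (u t < r t)) = y}) :=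
        measure_mono fun u hu => Set.mem_biUnion hu rfl
    _ ≤ _ := (measure_biUnion_finset_le _ _).trans_eq
        (sum_congr rfl fun y _ => pi_volume_labels_eq hr y)

end Cube

instance {α β : Type*} : MeasurableSpace (α ↪ β) := ⊤

instance {α β : Type*} : MeasurableSingletonClass (α ↪ β) :=
  ⟨fun _ => MeasurableSpace.measurableSet_top⟩

lemma sum_embedding_eq_sum_injTuples {α M : Type*} [Fintype α] [DecidableEq α]
    [AddCommMonoid M] (k : ℕ) (φ : (Fin k → α) → M) :
    ∑ σ : Fin k ↪ α, φ σ = ∑ f ∈ injTuples k univ, φ f :=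
  sum_bij' (fun σ _ => σ) (fun f hf => ⟨f, (mem_injTuples.1 hf).2⟩)
    (fun σ _ => mem_injTuples.2 ⟨fun _ => mem_univ _, σ.injective⟩) (fun _ _ => mem_univ _)
    (fun _ _ => rfl) (fun _ _ => rfl) (fun _ _ => rfl)

theorem uniformOfFintype_prod_labels_mem_le {T ι : Type*} [Fintype T] [Nonempty T]
    [MeasurableSpace T] [MeasurableSingletonClass T] [Fintype ι] {r : T → ι → ℝ}
    (hr : ∀ σ t, r σ t ∈ Set.Icc (0 : ℝ) 1) (Y : Finset (ι → Bool)) :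
    ((PMF.uniformOfFintype T).toMeasure.prod
        (Measure.pi fun _ : ι => volume.restrict (Set.Icc (0 : ℝ) 1)))
      {ω | (fun t => decide (ω.2 t < r ω.1 t)) ∈ Y}
      ≤ (Fintype.card T : ENNReal)⁻¹ * ∑ σ, ∑ y ∈ Y, ENNReal.ofReal (bernoulliProb (r σ) y) := by
  rw [mul_sum]
  refine (measure_prod_le_sum_singleton _ _ _).trans (sum_le_sum fun σ _ => ?_)
  rw [PMF.toMeasure_apply_singleton _ _ (measurableSet_singleton _), PMF.uniformOfFintype_apply]
  exact mul_le_mul_right (pi_volume_labels_mem_le (hr σ) Y) _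

theorem uniformOfFintype_embedding_prod_tail_le {S : Type*} [Fintype S] [DecidableEq S] {Q : ℕ}
    [Nonempty (Fin Q ↪ S)] {g : S → ℝ} (hg : ∀ j, g j ∈ Set.Icc (0 : ℝ) 1) (hQ : 0 < Q)
    {τ : ℝ} (hτ : 0 < τ) :
    ((PMF.uniformOfFintype (Fin Q ↪ S)).toMeasure.prod
        (Measure.pi fun _ : Fin Q => volume.restrict (Set.Icc (0 : ℝ) 1)))
      {ω | τ < |(∑ t, if ω.2 t < g (ω.1 t) then (1 : ℝ) else 0) / Q - 𝔼 j, g j|}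
      ≤ ENNReal.ofReal (2 * exp (-(Q * τ ^ 2))) := by
  set Y : Finset (Fin Q → Bool) := {y | τ < |numTrue y / Q - 𝔼 j, g j|}
  set N := #(injTuples Q (univ : Finset S))
  have hN : Fintype.card (Fin Q ↪ S) = N := by
    rw [Fintype.card_eq_sum_ones, sum_embedding_eq_sum_injTuples Q fun _ => 1, ← card_eq_sum_ones]
  have hQS : Q ≤ #(univ : Finset S) := by
    simpa using Fintype.card_le_of_embedding (Classical.arbitrary (Fin Q ↪ S))
  have hP (f : Fin Q → S) := bernoulliProb_nonneg (r := g ∘ f) fun t => hg _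
  have hevent : {ω : (Fin Q ↪ S) × (Fin Q → ℝ) |
        τ < |(∑ t, if ω.2 t < g (ω.1 t) then (1 : ℝ) else 0) / Q - 𝔼 j, g j|}
      = {ω | (fun t => decide (ω.2 t < (g ∘ ω.1) t)) ∈ Y} := by
    ext ω
    simp [Y, numTrue]
  rw [hevent]
  calc _ ≤ (Fintype.card (Fin Q ↪ S) : ENNReal)⁻¹ *
          ∑ σ : Fin Q ↪ S, ∑ y ∈ Y, ENNReal.ofReal (bernoulliProb (g ∘ σ) y) :=
        uniformOfFintype_prod_labels_mem_le (fun _ _ => hg _) Y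
    _ = (N : ENNReal)⁻¹ *
          ENNReal.ofReal (∑ f ∈ injTuples Q univ, ∑ y ∈ Y, bernoulliProb (g ∘ f) y) := by
        rw [hN, sum_embedding_eq_sum_injTuples Q
          fun f => ∑ y ∈ Y, ENNReal.ofReal (bernoulliProb (g ∘ f) y),
          ENNReal.ofReal_sum_of_nonneg (f := fun f => ∑ y ∈ Y, bernoulliProb (g ∘ f) y)
            fun f _ => sum_nonneg fun y _ => hP f y]
        exact congrArg _ (sum_congr rfl fun f _ =>
          (ENNReal.ofReal_sum_of_nonneg fun y _ => hP f y).symm)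
    _ ≤ (N : ENNReal)⁻¹ * ENNReal.ofReal (N * (2 * exp (-(Q * τ ^ 2)))) := by
        gcongr
        exact sum_injTuples_sum_bernoulliProb_tail_le (fun j _ => hg j) hQ hQS hτ
    _ = ENNReal.ofReal (2 * exp (-(Q * τ ^ 2))) := by
        have hN0 : (N : ENNReal) ≠ 0 := by rw [← hN]; exact_mod_cast Fintype.card_ne_zero
        rw [ENNReal.ofReal_mul (Nat.cast_nonneg _), ENNReal.ofReal_natCast, ← mul_assoc,
          ENNReal.inv_mul_cancel hN0 (ENNReal.natCast_ne_top _), one_mul]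

/-- The sample `J₁, …, J_Q` drawn without replacement is a uniformly random embedding
`Fin Q ↪ Nout`, and the label `y_{i,J_t}` is `+1` iff an independent uniform threshold
`u t ∈ [0,1]` lies below `(p + q J_t)/2`. -/
theorem delta_out_concentration
    {V : Type*} [Fintype V] [DecidableEq V]
    (Nout : Finset V) (Q : ℕ) (hQpos : 0 < Q) (hQd : Q ≤ Nout.card)
    (p : ℝ) (hp : p ∈ Set.Icc (0 : ℝ) 1)
    (q : V → ℝ) (hq : ∀ j ∈ Nout, q j ∈ Set.Icc (0 : ℝ) 1)
    (ε δ : ℝ) (hε : 0 < ε) (hδ : δ ∈ Set.Ioo (0 : ℝ) 1)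
    (hQdef : (Q : ℝ) = 1 / (2 * ε ^ 2) * Real.log (4 * (Fintype.card V : ℝ) / δ)) :
    ((@PMF.uniformOfFintype (Fin Q ↪ {j // j ∈ Nout}) _
          (Function.Embedding.nonempty_of_card_le (by simpa using hQd))).toMeasure.prod
        (Measure.pi fun _ : Fin Q => volume.restrict (Set.Icc (0 : ℝ) 1)))
      {ω : (Fin Q ↪ {j // j ∈ Nout}) × (Fin Q → ℝ) |
        2 * ε < |(∑ t : Fin Q,
              if ω.2 t < (p + q (ω.1 t : V)) / 2 then (1 : ℝ) else 0) / (Q : ℝ)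
            - (p + (∑ j ∈ Nout, q j) / (Nout.card : ℝ)) / 2|}
      ≤ ENNReal.ofReal (δ / (Fintype.card V : ℝ)) := by
  have : Nonempty (Fin Q ↪ Nout) := Function.Embedding.nonempty_of_card_le (by simpa using hQd)
  have hg (j : Nout) : (p + q j) / 2 ∈ Set.Icc (0 : ℝ) 1 := by
    have := hq j j.2
    constructor <;> linarith [hp.1, hp.2, this.1, this.2]
  have hNout : (0 : ℝ) < #Nout := by exact_mod_cast hQpos.trans_le hQd
  have hV : (0 : ℝ) < Fintype.card V := hNout.trans_le (by exact_mod_cast card_le_univ Nout)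
  have hmean : (p + (∑ j ∈ Nout, q j) / #Nout) / 2 = 𝔼 j : Nout, (p + q j) / 2 := by
    rw [expect_eq_sum_div_card, card_univ, Fintype.card_coe, ← sum_div, sum_add_distrib,
      sum_const, card_univ, Fintype.card_coe, nsmul_eq_mul, sum_coe_sort Nout q]
    field_simp
  have hlog : Real.log (4 * Fintype.card V / δ) = 2 * ε ^ 2 * Q := by
    rw [hQdef]
    field_simp
  have hbound : 2 * exp (-(Q * (2 * ε) ^ 2)) ≤ δ / Fintype.card V := by
    calc 2 * exp (-(Q * (2 * ε) ^ 2)) ≤ 2 * exp (-Real.log (4 * Fintype.card V / δ)) := by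
          rw [hlog]
          refine mul_le_mul_of_nonneg_left (exp_le_exp.2 ?_) zero_le_two
          nlinarith [mul_nonneg (sq_nonneg ε) (Nat.cast_nonneg Q : (0 : ℝ) ≤ Q)]
      _ = δ / (2 * Fintype.card V) := by
          rw [exp_neg, exp_log (by have := hδ.1; positivity)]
          field_simp
          ring
      _ ≤ δ / Fintype.card V := by gcongr <;> linarith [hδ.1]
  rw [hmean]
  exact (uniformOfFintype_embedding_prod_tail_le hg hQpos (by positivity)).trans
    (ENNReal.ofReal_le_ofReal hbound)
end

section
/- Let E_L' be a set of Q directed edges in which every vertex occurs at most once as an edge origin and at most once as an edge destination. Suppose the parameters p_i of all origin vertices are i.i.d. [0,1]-valued random variables with mean μ_p, the parameters q_j of all destination vertices are i.i.d. [0,1]-valued random variables with mean μ_q (independent of the p's), and conditionally on all parameters each edge label y_{i,j} ∈ {−1,+1} is independently +1 with probability (p_i + q_j)/2. Let τ̂ = (1/Q)·Σ_{(i,j) ∈ E_L'} 1[y_{i,j} = 1]. If Q ≥ (1/(2ε²))·ln(2/δ) for some ε > 0 and δ ∈ (0,1), then Pr(|τ̂ − (μ_p + μ_q)/2| > 3ε)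 ≤ 3δ. -/
open MeasureTheory ProbabilityTheory Real Set
open scoped NNReal

/-!
Rearranging coordinates, `((p_t), (q_t), (u_t))` is an i.i.d. sample of triples `(p, q, u)`, and
the label indicators are a fixed `[0, 1]`-valued statistic of these triples; by Fubini (first in
`u`, which is uniform) its mean is `(μ_p + μ_q) / 2`. Hoeffding's inequality then bounds the
probability of a deviation `3ε` of the sample mean by `2 exp (-18 Q ε²) ≤ δ`.
-/

theorem measurePreserving_arrowProdProdEquiv (α β γ ι : Type*) [MeasurableSpace α]
    [MeasurableSpace β] [MeasurableSpace γ] [Fintype ι] (μ : ι → Measure α) (ν : ι → Measure β)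
    (ρ : ι → Measure γ) [∀ i, SigmaFinite (μ i)] [∀ i, SigmaFinite (ν i)]
    [∀ i, SigmaFinite (ρ i)] :
    MeasurePreserving
      ((MeasurableEquiv.arrowProdEquivProdArrow α (β × γ) ι).trans
        (MeasurableEquiv.prodCongr (MeasurableEquiv.refl _)
          (MeasurableEquiv.arrowProdEquivProdArrow β γ ι)))
      (Measure.pi fun i => (μ i).prod ((ν i).prod (ρ i)))
      ((Measure.pi μ).prod ((Measure.pi ν).prod (Measure.pi ρ))) :=
  ((MeasurePreserving.id _).prod (measurePreserving_arrowProdEquivProdArrow β γ ι ν ρ)).comp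
    (measurePreserving_arrowProdEquivProdArrow α (β × γ) ι μ fun i => (ν i).prod (ρ i))

theorem ProbabilityTheory.HasSubgaussianMGF.measureReal_abs_ge_le {Ω : Type*}
    [MeasurableSpace Ω] {μ : Measure Ω} {X : Ω → ℝ} {c : ℝ≥0} (h : HasSubgaussianMGF X c μ)
    {ε : ℝ} (hε : 0 ≤ ε) :
    μ.real {ω | ε ≤ |X ω|} ≤ 2 * exp (-ε ^ 2 / (2 * c)) := by
  have hsplit : {ω | ε ≤ |X ω|} = {ω | ε ≤ X ω} ∪ {ω | ε ≤ (-X) ω} := by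
    ext ω; simp [le_abs]
  calc μ.real {ω | ε ≤ |X ω|} ≤ μ.real {ω | ε ≤ X ω} + μ.real {ω | ε ≤ (-X) ω} := by
        rw [hsplit]; exact measureReal_union_le _ _
    _ ≤ exp (-ε ^ 2 / (2 * c)) + exp (-ε ^ 2 / (2 * c)) :=
        add_le_add (h.measure_ge_le hε) (h.neg.measure_ge_le hε)
    _ = 2 * exp (-ε ^ 2 / (2 * c)) := by ring

theorem measureReal_abs_sampleMean_sub_integral_ge_le {E : Type*} [MeasurableSpace E]
    (θ : Measure E) [IsProbabilityMeasure θ] {g : E → ℝ} (hg : Measurable g) {a b : ℝ}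
    (hab : ∀ x, g x ∈ Icc a b) (n : ℕ) {ε : ℝ} (hε : 0 ≤ ε) :
    (Measure.pi fun _ : Fin n => θ).real {ω | ε ≤ |(∑ i, g (ω i)) / n - ∫ x, g x ∂θ|}
      ≤ 2 * exp (-2 * n * ε ^ 2 / (b - a) ^ 2) := by
  set m := ∫ x, g x ∂θ
  have hsubG : HasSubgaussianMGF (fun x => g x - m) ((‖b - a‖₊ / 2) ^ 2) θ :=
    hasSubgaussianMGF_of_mem_Icc hg.aemeasurable (ae_of_all _ hab)
  have hsample (i : Fin n) : HasSubgaussianMGF (fun ω : Fin n → E => g (ω i) - m)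
      ((‖b - a‖₊ / 2) ^ 2) (Measure.pi fun _ => θ) :=
    HasSubgaussianMGF.of_map (measurable_pi_apply i).aemeasurable
      (by rwa [(measurePreserving_eval (fun _ => θ) i).map_eq])
  have hindep : iIndepFun (fun (i : Fin n) (ω : Fin n → E) => g (ω i) - m)
      (Measure.pi fun _ => θ) :=
    iIndepFun_pi (X := fun _ x => g x - m) fun _ => (hg.sub_const m).aemeasurable
  have hsum := HasSubgaussianMGF.sum_of_iIndepFun hindep (s := Finset.univ) fun i _ => hsample i
  have hevent : {ω : Fin n → E | ε ≤ |(∑ i, g (ω i)) / n - m|}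
      ⊆ {ω | n * ε ≤ |∑ i, (g (ω i) - m)|} := by
    intro ω hω
    rcases Nat.eq_zero_or_pos n with rfl | hn
    · simp
    · have hcentre : ∑ i, (g (ω i) - m) = n * ((∑ i, g (ω i)) / n - m) := by
        rw [Finset.sum_sub_distrib]; field_simp; simp
      simp only [mem_ofPred_eq, hcentre, abs_mul, Nat.abs_cast] at hω ⊢
      exact mul_le_mul_of_nonneg_left hω n.cast_nonneg
  refine (measureReal_mono hevent).trans ((hsum.measureReal_abs_ge_le (by positivity)).trans ?_)
  rcases Nat.eq_zero_or_pos n with rfl | hn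
  · simp
  · apply le_of_eq
    congr 2
    push_cast
    simp only [Finset.sum_const, Finset.card_univ, Fintype.card_fin, nsmul_eq_mul,
      Real.norm_eq_abs, div_pow, sq_abs]
    field_simp

theorem integral_ite_lt_uniform {c : ℝ} (hc : c ∈ Icc (0 : ℝ) 1) :
    ∫ v, (if v < c then (1 : ℝ) else 0) ∂(volume.restrict (Icc (0 : ℝ) 1)) = c := by
  have hind : (fun v : ℝ => if v < c then (1 : ℝ) else 0) = (Iio c).indicator 1 := by
    ext v; simp [indicator_apply]
  have hinter : Iio c ∩ Icc 0 1 = Ico 0 c := by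
    ext v; simp only [mem_inter_iff, mem_Iio, mem_Icc, mem_Ico]; grind
  rw [hind, integral_indicator_one measurableSet_Iio, measureReal_restrict_apply measurableSet_Iio,
    hinter, Real.volume_real_Ico_of_le hc.1, sub_zero]

/-- For `e = (p, q, u)` with `u` uniform on `[0, 1]`, the indicator of the label `+1`, which thus
has probability `(p + q) / 2`. -/
noncomputable def positiveLabelIndicator (e : ℝ × ℝ × ℝ) : ℝ :=
  if e.2.2 < (e.1 + e.2.1) / 2 then 1 else 0

theorem measurable_positiveLabelIndicator : Measurable positiveLabelIndicator :=
  Measurable.ite (measurableSet_lt (by fun_prop) (by fun_prop)) measurable_const measurable_const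

theorem positiveLabelIndicator_mem_Icc (e : ℝ × ℝ × ℝ) : positiveLabelIndicator e ∈ Icc 0 1 := by
  unfold positiveLabelIndicator; split_ifs <;> simp

theorem integral_positiveLabelIndicator (νp νq : Measure ℝ) [IsProbabilityMeasure νp]
    [IsProbabilityMeasure νq] (hνp : ∀ᵐ x ∂νp, x ∈ Icc (0 : ℝ) 1)
    (hνq : ∀ᵐ x ∂νq, x ∈ Icc (0 : ℝ) 1) :
    ∫ e, positiveLabelIndicator e ∂(νp.prod (νq.prod (volume.restrict (Icc (0 : ℝ) 1))))
      = ((∫ x, x ∂νp) + ∫ x, x ∂νq) / 2 := by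
  have hint : Integrable positiveLabelIndicator
      (νp.prod (νq.prod (volume.restrict (Icc (0 : ℝ) 1)))) :=
    .of_mem_Icc 0 1 measurable_positiveLabelIndicator.aemeasurable
      (ae_of_all _ positiveLabelIndicator_mem_Icc)
  have hip : Integrable (fun x : ℝ => x) νp := .of_mem_Icc 0 1 aemeasurable_id hνp
  have hiq : Integrable (fun x : ℝ => x) νq := .of_mem_Icc 0 1 aemeasurable_id hνq
  have hinner : ∀ᵐ p ∂νp, ∫ y, positiveLabelIndicator (p, y)
      ∂(νq.prod (volume.restrict (Icc (0 : ℝ) 1))) = (p + ∫ x, x ∂νq) / 2 := by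
    filter_upwards [hνp, hint.prod_right_ae] with p hp hintp
    rw [integral_prod _ hintp]
    calc _ = ∫ q, (p + q) / 2 ∂νq := by
          refine integral_congr_ae ?_
          filter_upwards [hνq] with q hq
          exact integral_ite_lt_uniform (c := (p + q) / 2) ⟨by linarith [hp.1, hq.1], by linarith [hp.2, hq.2]⟩
      _ = _ := by rw [integral_div, integral_add (integrable_const p) hiq]; simp
  rw [integral_prod _ hint, integral_congr_ae hinner, integral_div,
    integral_add hip (integrable_const _)]
  simp

theorem two_mul_exp_neg_le_of_log_two_div_le {n ε δ : ℝ} (hε : 0 < ε) (hδ : δ ∈ Ioo (0 : ℝ) 1)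
    (hn : (1 / (2 * ε ^ 2)) * log (2 / δ) ≤ n) :
    2 * exp (-2 * n * ε ^ 2) ≤ δ := by
  have hlog : log (2 / δ) ≤ 2 * n * ε ^ 2 := by
    rw [one_div_mul_eq_div, div_le_iff₀ (by positivity)] at hn; linarith
  calc 2 * exp (-2 * n * ε ^ 2) ≤ 2 * exp (-log (2 / δ)) := by gcongr; linarith
    _ = δ := by rw [exp_neg, exp_log (div_pos two_pos hδ.1)]; field_simp

theorem tau_hat_concentration_general
    (Q : ℕ)
    (νp νq : Measure ℝ) [IsProbabilityMeasure νp] [IsProbabilityMeasure νq]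
    (hνp : νp (Set.Icc (0 : ℝ) 1) = 1) (hνq : νq (Set.Icc (0 : ℝ) 1) = 1)
    (ε δ : ℝ) (hε : 0 < ε) (hδ : δ ∈ Set.Ioo (0 : ℝ) 1)
    (hQbound : (1 / (2 * ε ^ 2)) * Real.log (2 / δ) ≤ (Q : ℝ)) :
    ((Measure.pi fun _ : Fin Q => νp).prod
        ((Measure.pi fun _ : Fin Q => νq).prod
          (Measure.pi fun _ : Fin Q => volume.restrict (Set.Icc (0 : ℝ) 1))))
      {ω : (Fin Q → ℝ) × ((Fin Q → ℝ) × (Fin Q → ℝ)) |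
        3 * ε < |(∑ t : Fin Q, if ω.2.2 t < (ω.1 t + ω.2.1 t) / 2 then (1 : ℝ) else 0)
            / (Q : ℝ) - ((∫ x, x ∂νp) + (∫ x, x ∂νq)) / 2|}
      ≤ ENNReal.ofReal (3 * δ) := by
  have : IsProbabilityMeasure (volume.restrict (Icc (0 : ℝ) 1)) := ⟨by simp⟩
  set θ := νp.prod (νq.prod (volume.restrict (Icc (0 : ℝ) 1)))
  have hmean : ∫ e, positiveLabelIndicator e ∂θ = ((∫ x, x ∂νp) + ∫ x, x ∂νq) / 2 :=
    integral_positiveLabelIndicator νp νq ((mem_ae_iff_prob_eq_one measurableSet_Icc).2 hνp)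
      ((mem_ae_iff_prob_eq_one measurableSet_Icc).2 hνq)
  have hhoeffding := measureReal_abs_sampleMean_sub_integral_ge_le θ
    measurable_positiveLabelIndicator positiveLabelIndicator_mem_Icc Q (by positivity : 0 ≤ 3 * ε)
  have htail : 2 * exp (-2 * Q * (3 * ε) ^ 2 / (1 - 0) ^ 2) ≤ 3 * δ := by
    have := two_mul_exp_neg_le_of_log_two_div_le hε hδ hQbound
    calc _ ≤ 2 * exp (-2 * Q * ε ^ 2) := by gcongr; nlinarith [Nat.cast_nonneg (α := ℝ) Q]
      _ ≤ 3 * δ := by linarith [hδ.1]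
  rw [← (measurePreserving_arrowProdProdEquiv ℝ ℝ ℝ (Fin Q) _ _ _).measure_preimage_equiv]
  calc _ ≤ (Measure.pi fun _ : Fin Q => θ)
        {ω | 3 * ε ≤ |(∑ t, positiveLabelIndicator (ω t)) / Q - ∫ e, positiveLabelIndicator e ∂θ|} :=
        measure_mono fun ω (hω : 3 * ε < _) => by rw [hmean]; exact hω.le
    _ = ENNReal.ofReal ((Measure.pi fun _ : Fin Q => θ).real
        {ω | 3 * ε ≤ |(∑ t, positiveLabelIndicator (ω t)) / Q - ∫ e, positiveLabelIndicator e ∂θ|}) :=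
        (ofReal_measureReal).symm
    _ ≤ ENNReal.ofReal (3 * δ) := ENNReal.ofReal_le_ofReal (hhoeffding.trans htail)

/-- **Concentration of the estimated bias `τ̂`.**  `E_L'` is a matching-like set of `Q`
directed edges, indexed by `t : Fin Q`: since no vertex appears twice as an origin nor
twice as a destination, the origin parameters are `Q` i.i.d. `[0,1]`-valued random
variables `p t` with common law `νp` (mean `μ_p = ∫ x dνp`), the destination
parameters are `Q` i.i.d. `[0,1]`-valued random variables `q t` with law `νq`
(mean `μ_q`), independent of the `p`'s, and conditionally on all parameters each label
`y_t` is independently `+1` with probability `(p t + q t)/2` (modeled by independent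
uniform `[0,1]` thresholds `u t`, with `y_t = +1 ↔ u t < (p t + q t)/2`).
With `τ̂ = (1/Q)·∑_t 1[y_t = +1]`, if `Q ≥ (1/(2ε²))·ln(2/δ)` then
`Pr(|τ̂ − (μ_p + μ_q)/2| > 3ε) ≤ 3δ`. -/
theorem tau_hat_concentration
    (Q : ℕ) (hQ : 1 ≤ Q)
    (νp νq : Measure ℝ) [IsProbabilityMeasure νp] [IsProbabilityMeasure νq]
    (hνp : νp (Set.Icc (0 : ℝ) 1) = 1) (hνq : νq (Set.Icc (0 : ℝ) 1) = 1)
    (ε δ : ℝ) (hε : 0 < ε) (hδ : δ ∈ Set.Ioo (0 : ℝ) 1)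
    (hQbound : (1 / (2 * ε ^ 2)) * Real.log (2 / δ) ≤ (Q : ℝ)) :
    ((Measure.pi fun _ : Fin Q => νp).prod
        ((Measure.pi fun _ : Fin Q => νq).prod
          (Measure.pi fun _ : Fin Q => volume.restrict (Set.Icc (0 : ℝ) 1))))
      {ω : (Fin Q → ℝ) × ((Fin Q → ℝ) × (Fin Q → ℝ)) |
        3 * ε < |(∑ t : Fin Q, if ω.2.2 t < (ω.1 t + ω.2.1 t) / 2 then (1 : ℝ) else 0)
            / (Q : ℝ) - ((∫ x, x ∂νp) + (∫ x, x ∂νq)) / 2|}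
      ≤ ENNReal.ofReal (3 * δ) :=
  tau_hat_concentration_general Q νp νq hνp hνq ε δ hε hδ hQbound
end
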